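/- Let p0, p1, p2 ∈ R_{2,1} have no common zeros on P^1 × P^1, and write p_i = A_i(x,y) z + B_i(x,y) w with A_i, B_i ∈ R_{2,0} for i = 0, 1, 2. Then C := (A1 B2 − A2 B1, A2 B0 − A0 B2, A0 B1 − A1 B0) is a nonzero element of Syz(p)_{6,1} that does not lie in the Koszul submodule. -/

import Mathlib

open MvPolynomial

noncomputable section

/-- The bigraded polynomial ring `R = k[x,y,z,w]`; variables `0,1,2,3` are `x,y,z,w`. -/
abbrev Rk (k : Type*) [Field k] := MvPolynomial (Fin 4) k

/-- The bigrading: `x, y` have degree `(1,0)`; `z, w` have degree `(0,1)`. -/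
def bidegWt : Fin 4 → ℤ × ℤ := ![(1, 0), (1, 0), (0, 1), (0, 1)]

/-- `p` is bihomogeneous of bidegree `(m, n)` (with the convention that only the zero
polynomial is bihomogeneous of a bidegree with a negative coordinate). -/
def Bihom {k : Type*} [Field k] (p : Rk k) (m n : ℤ) : Prop :=
  p.IsWeightedHomogeneous bidegWt (m, n)

/-- `p0, p1, p2` have no common zeros on `ℙ¹ × ℙ¹`. -/
def NoCommonZeros {k : Type*} [Field k] (p0 p1 p2 : Rk k) : Prop :=
  ∀ a b c d : k, (a, b) ≠ (0, 0) → (c, d) ≠ (0, 0) →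
    eval ![a, b, c, d] p0 ≠ 0 ∨ eval ![a, b, c, d] p1 ≠ 0 ∨ eval ![a, b, c, d] p2 ≠ 0

/-- The map `(A0, A1, A2) ↦ A0 p0 + A1 p1 + A2 p2`, as a `k`-linear map on `R³`. -/
def syzMapk {k : Type*} [Field k] (p : Fin 3 → Rk k) : (Fin 3 → Rk k) →ₗ[k] Rk k :=
  ∑ i : Fin 3, (LinearMap.mulRight k (p i)).comp (LinearMap.proj i)

/-- The bigraded piece `Syz(p)_{m,n}`: triples `(A0, A1, A2)` of bihomogeneous polynomials of
bidegree `(m-2, n-1)` with `A0 p0 + A1 p1 + A2 p2 = 0`, as a `k`-subspace of `R³`. -/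
def SyzPiece {k : Type*} [Field k] (p : Fin 3 → Rk k) (m n : ℤ) :
    Submodule k (Fin 3 → Rk k) :=
  (Submodule.pi Set.univ fun _ => weightedHomogeneousSubmodule k bidegWt (m - 2, n - 1)) ⊓
    LinearMap.ker (syzMapk p)

/-- The syzygy module `Syz(p)`, as an `R`-submodule of `R³`. -/
def Syz {k : Type*} [Field k] (p : Fin 3 → Rk k) : Submodule (Rk k) (Fin 3 → Rk k) :=
  LinearMap.ker (∑ i : Fin 3, (LinearMap.mulRight (Rk k) (p i)).comp (LinearMap.proj i))

/-- The Koszul submodule of `R³`: the `R`-submodule generated by the three Koszul syzygies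
`(p1, −p0, 0)`, `(p2, 0, −p0)`, `(0, p2, −p1)`. -/
def KoszulSub {k : Type*} [Field k] (p0 p1 p2 : Rk k) : Submodule (Rk k) (Fin 3 → Rk k) :=
  Submodule.span (Rk k) {![p1, -p0, 0], ![p2, 0, -p0], ![0, p2, -p1]}

/-- `p0, p1, p2 ∈ R_{2,1}` are generic: only finitely many points `[a0 : a1 : a2]` of `ℙ²(k)`
are such that `a0 p0 + a1 p1 + a2 p2` factors as `q · l` with `q ∈ R_{2,0}`, `l ∈ R_{0,1}`. -/
def BidegGeneric {k : Type*} [Field k] (p0 p1 p2 : Rk k) : Prop :=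
  {P : Projectivization k (Fin 3 → k) |
    ∃ q l : Rk k, Bihom q 2 0 ∧ Bihom l 0 1 ∧
      P.rep 0 • p0 + P.rep 1 • p1 + P.rep 2 • p2 = q * l}.Finite

/-!
The vector `C` is the cross product `A ⨯₃ B` of the coefficient vectors of `p = z • A + w • B`,
so `C ⬝ᵥ p = 0` and `C` is a syzygy. If `C` vanished, then at `(x, y) = (1, 0)` the vectors
`A(1,0)` and `B(1,0)` in `k³` would be linearly dependent, say `c A(1,0) + d B(1,0) = 0` with
`(c, d) ≠ 0`, and `(1, 0; c, d)` would be a common zero of the `pᵢ`. Finally every Koszul syzygy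
has entries in the ideal `(z, w)`, while the entries of `C` do not involve `z, w` and are not
all zero, so `C` is not a Koszul syzygy.
-/

open Matrix

section CrossProduct

variable {R : Type*} [CommRing R]

theorem cross_dotProduct_mul_add_mul (u v : Fin 3 → R) (a b : R) :
    (u ⨯₃ v) ⬝ᵥ (fun i => u i * a + v i * b) = 0 := by
  simp only [cross_apply, dotProduct, Fin.sum_univ_three, cons_val_zero, cons_val_one,
    cons_val_two, head_cons, tail_cons]
  ring

theorem map_cross {S : Type*} [CommRing S] (f : R →+* S) (u v : Fin 3 → R) :
    f ∘ (u ⨯₃ v) = (f ∘ u) ⨯₃ (f ∘ v) := by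
  ext i
  fin_cases i <;> simp [cross_apply]

end CrossProduct

section Bihomogeneous

variable {k : Type*} [Field k]

def zwCombination (A B : Fin 3 → Rk k) : Fin 3 → Rk k := fun i => A i * X 2 + B i * X 3

theorem weight_bidegWt (d : Fin 4 →₀ ℕ) :
    Finsupp.weight bidegWt d = (((d 0 + d 1 : ℕ) : ℤ), ((d 2 + d 3 : ℕ) : ℤ)) := by
  rw [Finsupp.weight_apply, Finsupp.sum_fintype _ _ fun i => zero_smul ℕ (bidegWt i)]
  simp [Fin.sum_univ_four, bidegWt, Prod.ext_iff]

theorem Bihom.mem_vars {q : Rk k} {m : ℤ} (hq : Bihom q m 0) {i : Fin 4} (hi : i ∈ q.vars) :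
    i = 0 ∨ i = 1 := by
  obtain ⟨d, hd, hid⟩ := (mem_vars_iff_mem_support i).mp hi
  have hzw : ((d 2 + d 3 : ℕ) : ℤ) = 0 := by
    simpa [weight_bidegWt] using congrArg Prod.snd (hq (mem_support_iff.mp hd))
  rw [Finsupp.mem_support_iff] at hid
  fin_cases i <;> simp at hid ⊢ <;> omega

theorem Bihom.aeval_congr {q : Rk k} {m : ℤ} (hq : Bihom q m 0) {S : Type*} [CommRing S]
    [Algebra k S] {f g : Fin 4 → S} (h0 : f 0 = g 0) (h1 : f 1 = g 1) :
    aeval f q = aeval g q :=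
  eval₂Hom_congr' rfl (fun i hi _ => by rcases hq.mem_vars hi with rfl | rfl <;> assumption) rfl

theorem Bihom.cross {A B : Fin 3 → Rk k} {m n m' n' : ℤ} (hA : ∀ i, Bihom (A i) m n)
    (hB : ∀ i, Bihom (B i) m' n') (i : Fin 3) : Bihom ((A ⨯₃ B) i) (m + m') (n + n') := by
  have hmul : ∀ i j, A i * B j ∈ weightedHomogeneousSubmodule k bidegWt (m + m', n + n') :=
    fun i j => (hA i).mul (hB j)
  fin_cases i <;> exact Submodule.sub_mem _ (hmul _ _) (hmul _ _)

theorem cross_ne_zero_of_noCommonZeros {A B : Fin 3 → Rk k} {m m' : ℤ}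
    (hA : ∀ i, Bihom (A i) m 0) (hB : ∀ i, Bihom (B i) m' 0)
    (h : NoCommonZeros (zwCombination A B 0) (zwCombination A B 1) (zwCombination A B 2)) :
    A ⨯₃ B ≠ 0 := by
  intro hAB
  let ev : Rk k →+* k := eval ![1, 0, 0, 0]
  have hdep : ¬ LinearIndependent k ![ev ∘ A, ev ∘ B] := by
    rw [← crossProduct_ne_zero_iff_linearIndependent, ← map_cross, hAB, not_not]
    ext; simp
  obtain ⟨c, d, hcd, hne⟩ : ∃ c d : k, c • (ev ∘ A) + d • (ev ∘ B) = 0 ∧ ¬(c = 0 ∧ d = 0) := by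
    simpa [LinearIndependent.pair_iff] using hdep
  have hzero : ∀ i, eval ![1, 0, c, d] (zwCombination A B i) = 0 := by
    intro i
    have hAi : eval ![1, 0, c, d] (A i) = ev (A i) := (hA i).aeval_congr rfl rfl
    have hBi : eval ![1, 0, c, d] (B i) = ev (B i) := (hB i).aeval_congr rfl rfl
    simp only [zwCombination, map_add, map_mul, hAi, hBi, eval_X]
    simpa [mul_comm] using congrFun hcd i
  rcases h 1 0 c d (by simp) (by simpa using hne) with h | h | h <;> exact h (hzero _)

theorem syzMapk_apply (p v : Fin 3 → Rk k) : syzMapk p v = v ⬝ᵥ p := by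
  simp [syzMapk, dotProduct]

theorem cross_mem_syzPiece {A B : Fin 3 → Rk k} {m m' : ℤ} (hA : ∀ i, Bihom (A i) m 0)
    (hB : ∀ i, Bihom (B i) m' 0) : A ⨯₃ B ∈ SyzPiece (zwCombination A B) (m + m' + 2) 1 := by
  refine Submodule.mem_inf.mpr ⟨Submodule.mem_pi.mpr fun i _ => ?_, ?_⟩
  · simpa [Bihom] using Bihom.cross hA hB i
  · rw [LinearMap.mem_ker, syzMapk_apply]
    exact cross_dotProduct_mul_add_mul A B _ _

theorem koszulSub_le_pi {p0 p1 p2 : Rk k} {I : Ideal (Rk k)} (h0 : p0 ∈ I) (h1 : p1 ∈ I)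
    (h2 : p2 ∈ I) : KoszulSub p0 p1 p2 ≤ Submodule.pi Set.univ fun _ => I := by
  refine Submodule.span_le.mpr ?_
  rintro v (rfl | rfl | rfl) i - <;> fin_cases i <;> simp [h0, h1, h2]

theorem cross_notMem_koszulSub {A B : Fin 3 → Rk k} {m m' : ℤ} (hA : ∀ i, Bihom (A i) m 0)
    (hB : ∀ i, Bihom (B i) m' 0) (hne : A ⨯₃ B ≠ 0) :
    A ⨯₃ B ∉ KoszulSub (zwCombination A B 0) (zwCombination A B 1) (zwCombination A B 2) := by
  let φ : Rk k →ₐ[k] Rk k := aeval ![X 0, X 1, 0, 0]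
  have hcomb : ∀ i, zwCombination A B i ∈ RingHom.ker φ := fun i => by simp [zwCombination, φ]
  intro hmem
  apply hne
  ext i : 1
  have hC : Bihom ((A ⨯₃ B) i) (m + m') 0 := by simpa using Bihom.cross hA hB i
  have hfix : φ ((A ⨯₃ B) i) = (A ⨯₃ B) i :=
    (hC.aeval_congr (f := ![X 0, X 1, 0, 0]) (g := X) rfl rfl).trans (aeval_X_left_apply _)
  rw [← hfix, Pi.zero_apply]
  exact koszulSub_le_pi (hcomb 0) (hcomb 1) (hcomb 2) hmem i (Set.mem_univ i)

end Bihomogeneous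

theorem statement10_general {k : Type*} [Field k] (p0 p1 p2 : Rk k)
    (hncz : NoCommonZeros p0 p1 p2)
    (A B : Fin 3 → Rk k) (hA : ∀ i, Bihom (A i) 2 0) (hB : ∀ i, Bihom (B i) 2 0)
    (hp0 : p0 = A 0 * X 2 + B 0 * X 3)
    (hp1 : p1 = A 1 * X 2 + B 1 * X 3)
    (hp2 : p2 = A 2 * X 2 + B 2 * X 3) :
    (![A 1 * B 2 - A 2 * B 1, A 2 * B 0 - A 0 * B 2, A 0 * B 1 - A 1 * B 0] : Fin 3 → Rk k)
        ≠ 0 ∧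
    (![A 1 * B 2 - A 2 * B 1, A 2 * B 0 - A 0 * B 2, A 0 * B 1 - A 1 * B 0] : Fin 3 → Rk k)
        ∈ SyzPiece ![p0, p1, p2] 6 1 ∧
    (![A 1 * B 2 - A 2 * B 1, A 2 * B 0 - A 0 * B 2, A 0 * B 1 - A 1 * B 0] : Fin 3 → Rk k)
        ∉ KoszulSub p0 p1 p2 := by
  subst hp0 hp1 hp2
  have hne : A ⨯₃ B ≠ 0 := cross_ne_zero_of_noCommonZeros hA hB hncz
  rw [← cross_apply]
  have hsyz : A ⨯₃ B ∈ SyzPiece (zwCombination A B) 6 1 :=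
    cross_mem_syzPiece (m := 2) (m' := 2) hA hB
  refine ⟨hne, ?_, cross_notMem_koszulSub hA hB hne⟩
  convert hsyz using 2
  ext i : 1
  fin_cases i <;> rfl

/-- **Proposition 6.3.** Writing `pᵢ = Aᵢ(x,y) z + Bᵢ(x,y) w`, the triple of
`2×2` minors `C = (A1 B2 − A2 B1, A2 B0 − A0 B2, A0 B1 − A1 B0)` is a nonzero element of
`Syz(p)_{6,1}` not lying in the Koszul submodule. -/
theorem statement10 {k : Type*} [Field k] [IsAlgClosed k] (p0 p1 p2 : Rk k)
    (h0 : Bihom p0 2 1) (h1 : Bihom p1 2 1) (h2 : Bihom p2 2 1)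
    (hncz : NoCommonZeros p0 p1 p2)
    (A B : Fin 3 → Rk k) (hA : ∀ i, Bihom (A i) 2 0) (hB : ∀ i, Bihom (B i) 2 0)
    (hp0 : p0 = A 0 * X 2 + B 0 * X 3)
    (hp1 : p1 = A 1 * X 2 + B 1 * X 3)
    (hp2 : p2 = A 2 * X 2 + B 2 * X 3) :
    (![A 1 * B 2 - A 2 * B 1, A 2 * B 0 - A 0 * B 2, A 0 * B 1 - A 1 * B 0] : Fin 3 → Rk k)
        ≠ 0 ∧
    (![A 1 * B 2 - A 2 * B 1, A 2 * B 0 - A 0 * B 2, A 0 * B 1 - A 1 * B 0] : Fin 3 → Rk k)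
        ∈ SyzPiece ![p0, p1, p2] 6 1 ∧
    (![A 1 * B 2 - A 2 * B 1, A 2 * B 0 - A 0 * B 2, A 0 * B 1 - A 1 * B 0] : Fin 3 → Rk k)
        ∉ KoszulSub p0 p1 p2 :=
  statement10_general p0 p1 p2 hncz A B hA hB hp0 hp1 hp2

end
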